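/- A left-invariant vector field V = a e₁ + b e₂ + c e₃ + d e₄ (a,b,c,d ∈ ℝ) defines a harmonic map (i.e., ∇*∇V = 0 and Σ_{i=1}^{4} εᵢ R(∇_{eᵢ}V, V)eᵢ = 0) if and only if c = −d. -/

import Mathlib

/-!
Koszul's formula, read against the basis `u` (which `g` pairs with itself up to swapping
`u 2` and `u 3`), determines `∇` on basis vectors. Since `∇_{u 2} = 0` and
`∇_{u i} u i ∈ ℝ • u 2` for `i = 0, 1`, the `e 2` and `e 3` terms of the rough Laplacian cancel
and `∇*∇V = (∇_{u 0}² + ∇_{u 1}²) V = -(c + d)(A² + E² + (B + D)²/2) • u 2`; the coefficient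
is nonzero because `E + A ≠ 0`. Conversely, for `c = -d` the field `V` lies in the abelian ideal
`𝔥` spanned by `u 0, u 1, u 2`, with `∇_𝔥 𝔥 ⊆ ℝ • u 2`, `∇_𝔥 u 2 = 0`, `∇_{u 2} = 0` and
`∇_{u 3} 𝔥 ⊆ 𝔥`. Hence `R(∇_{eᵢ}V, V) eᵢ = 0` for `i = 0, 1`, and the `e 2`, `e 3` terms
combine to `R(∇_{u 3}V, V) u 2 = 0`.
-/

open Module

theorem Module.Basis.eq_of_forall_pairing_eq {R M ι : Type*} [CommRing R] [AddCommGroup M]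
    [Module R M] [Fintype ι] [DecidableEq ι] (u : Basis ι R M) (g : M →ₗ[R] M →ₗ[R] R)
    (σ : Equiv.Perm ι) (hg : ∀ i j, g (u i) (u j) = if σ i = j then 1 else 0) {w w' : M}
    (h : ∀ k, g w (u k) = g w' (u k)) : w = w' := by
  have repr_eq : ∀ x i, u.repr x i = g x (u (σ i)) := by
    intro x i
    conv_rhs => rw [← u.sum_repr x]
    simp only [map_sum, map_smul, LinearMap.sum_apply, LinearMap.smul_apply, hg,
      σ.injective.eq_iff, smul_eq_mul, mul_ite, mul_one, mul_zero, Finset.sum_ite_eq',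
      Finset.mem_univ, if_true]
  exact u.ext_elem fun i => by rw [repr_eq, repr_eq, h]

theorem LinearMap.apply_self_eq_zero_of_antisymm {R M : Type*} [Field R] [CharZero R]
    [AddCommGroup M] [Module R M] (lie : M →ₗ[R] M →ₗ[R] M)
    (hanti : ∀ X Y : M, lie X Y = - lie Y X) (X : M) : lie X X = 0 := by
  have h := hanti X X
  rw [eq_neg_iff_add_eq_zero, ← two_smul R, smul_eq_zero] at h
  exact h.resolve_left two_ne_zero

section
variable {G : Type*} [AddCommGroup G] [Module ℝ G]

def roughLaplacian {ι : Type*} [Fintype ι] (nabla : G →ₗ[ℝ] G →ₗ[ℝ] G) (ε : ι → ℝ) (e : ι → G)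
    (V : G) : G :=
  ∑ i, ε i • (nabla (e i) (nabla (e i) V) - nabla (nabla (e i) (e i)) V)

def curvature (lie nabla : G →ₗ[ℝ] G →ₗ[ℝ] G) (X Y Z : G) : G :=
  nabla (lie X Y) Z - nabla X (nabla Y Z) + nabla Y (nabla X Z)

def curvatureTrace {ι : Type*} [Fintype ι] (lie nabla : G →ₗ[ℝ] G →ₗ[ℝ] G) (ε : ι → ℝ)
    (e : ι → G) (V : G) : G :=
  ∑ i, ε i • curvature lie nabla (nabla (e i) V) V (e i)

noncomputable def bracketTable (u : Basis (Fin 4) ℝ G) (A B C D E F L : ℝ) :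
    Fin 4 → Fin 4 → G :=
  ![![0, 0, 0, A • u 0 + B • u 1 + C • u 2],
    ![0, 0, 0, D • u 0 + E • u 1 + F • u 2],
    ![0, 0, 0, L • u 2],
    ![-(A • u 0 + B • u 1 + C • u 2), -(D • u 0 + E • u 1 + F • u 2), -(L • u 2), 0]]

noncomputable def christoffelTable (u : Basis (Fin 4) ℝ G) (A B C D E F L : ℝ) :
    Fin 4 → Fin 4 → G :=
  ![![(-A) • u 2, (-((B + D) / 2)) • u 2, 0, A • u 0 + ((B + D) / 2) • u 1],
    ![(-((B + D) / 2)) • u 2, (-E) • u 2, 0, ((B + D) / 2) • u 0 + E • u 1],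
    ![0, 0, 0, 0],
    ![((D - B) / 2) • u 1 + (-C) • u 2, ((B - D) / 2) • u 0 + (-F) • u 2, (-L) • u 2,
      C • u 0 + F • u 1 + L • u 3]]

noncomputable def frame (u : Basis (Fin 4) ℝ G) : Fin 4 → G :=
  ![u 0, u 1, (-(1 / 2 : ℝ)) • u 2 + u 3, (1 / 2 : ℝ) • u 2 + u 3]

def frameSign : Fin 4 → ℝ := fun i => if i = 2 then -1 else 1

variable {u : Basis (Fin 4) ℝ G} {lie nabla : G →ₗ[ℝ] G →ₗ[ℝ] G} {A B C D E F L : ℝ}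

theorem lie_basis_eq_bracketTable (hanti : ∀ X Y : G, lie X Y = - lie Y X)
    (h12 : lie (u 0) (u 1) = 0) (h13 : lie (u 0) (u 2) = 0)
    (h14 : lie (u 0) (u 3) = A • u 0 + B • u 1 + C • u 2) (h23 : lie (u 1) (u 2) = 0)
    (h24 : lie (u 1) (u 3) = D • u 0 + E • u 1 + F • u 2) (h34 : lie (u 2) (u 3) = L • u 2)
    (i j : Fin 4) : lie (u i) (u j) = bracketTable u A B C D E F L i j := by
  fin_cases i <;> fin_cases j <;>
    simp [bracketTable, lie.apply_self_eq_zero_of_antisymm hanti, h12, h13, h14, h23, h24, h34,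
      hanti (u 1) (u 0), hanti (u 2) (u 0), hanti (u 2) (u 1), hanti (u 3) (u 0),
      hanti (u 3) (u 1), hanti (u 3) (u 2)]

theorem nabla_basis_eq_christoffelTable (g : G →ₗ[ℝ] G →ₗ[ℝ] ℝ)
    (hg : ∀ i j : Fin 4, g (u i) (u j) =
      if (i = 0 ∧ j = 0) ∨ (i = 1 ∧ j = 1) ∨ (i = 2 ∧ j = 3) ∨ (i = 3 ∧ j = 2) then 1 else 0)
    (hK : ∀ X Y Z : G, 2 * g (nabla X Y) Z = g (lie X Y) Z - g (lie Y Z) X + g (lie Z X) Y)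
    (hΛ : ∀ i j, lie (u i) (u j) = bracketTable u A B C D E F L i j) (i j : Fin 4) :
    nabla (u i) (u j) = christoffelTable u A B C D E F L i j := by
  have hswap : ∀ i j : Fin 4,
      ((i = 0 ∧ j = 0) ∨ (i = 1 ∧ j = 1) ∨ (i = 2 ∧ j = 3) ∨ (i = 3 ∧ j = 2)) ↔
        Equiv.swap 2 3 i = j := by
    decide
  have hg_swap : ∀ i j, g (u i) (u j) = if Equiv.swap 2 3 i = j then 1 else 0 := by
    simpa only [hswap] using hg
  refine u.eq_of_forall_pairing_eq g (Equiv.swap 2 3) hg_swap fun k => ?_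
  have hk := hK (u i) (u j) (u k)
  simp only [hΛ] at hk
  fin_cases i <;> fin_cases j <;> fin_cases k <;>
    simp only [bracketTable, christoffelTable, hg, Fin.reduceFinMk, Fin.zero_eta, Fin.mk_one,
      Fin.isValue, Matrix.cons_val, map_add, map_smul, map_neg, map_zero, LinearMap.add_apply,
      LinearMap.smul_apply, LinearMap.neg_apply, LinearMap.zero_apply, smul_eq_mul, Fin.reduceEq,
      reduceIte, and_self, and_false, false_and, or_false, or_true] at hk ⊢ <;>
    linarith

theorem roughLaplacian_frame_eq
    (hΓ : ∀ i j, nabla (u i) (u j) = christoffelTable u A B C D E F L i j) (a b c d : ℝ) :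
    roughLaplacian nabla frameSign (frame u)
        (a • frame u 0 + b • frame u 1 + c • frame u 2 + d • frame u 3) =
      (-((c + d) * (A ^ 2 + E ^ 2 + (B + D) ^ 2 / 2))) • u 2 := by
  simp only [roughLaplacian, Fin.sum_univ_four, frame, frameSign, Fin.isValue, Matrix.cons_val,
    Fin.reduceEq, reduceIte, map_add, map_smul, map_zero, smul_add, smul_zero, smul_smul,
    LinearMap.add_apply, LinearMap.smul_apply, LinearMap.zero_apply, hΓ, christoffelTable]
  module

theorem curvatureTrace_frame_eq_zero
    (hΛ : ∀ i j, lie (u i) (u j) = bracketTable u A B C D E F L i j)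
    (hΓ : ∀ i j, nabla (u i) (u j) = christoffelTable u A B C D E F L i j) {a b c d : ℝ}
    (hcd : c = -d) :
    curvatureTrace lie nabla frameSign (frame u)
        (a • frame u 0 + b • frame u 1 + c • frame u 2 + d • frame u 3) = 0 := by
  subst hcd
  simp only [curvatureTrace, curvature, Fin.sum_univ_four, frame, frameSign, Fin.isValue,
    Matrix.cons_val, Fin.reduceEq, reduceIte, map_add, map_smul, map_neg, map_zero, smul_add,
    smul_neg, smul_zero, smul_smul, LinearMap.add_apply, LinearMap.smul_apply, LinearMap.neg_apply,
    LinearMap.zero_apply, hΓ, hΛ, christoffelTable, bracketTable]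
  module

end

theorem stmt_18_general {G : Type*} [AddCommGroup G] [Module ℝ G]
    (u : Module.Basis (Fin 4) ℝ G)
    (lie : G →ₗ[ℝ] G →ₗ[ℝ] G)
    (g : G →ₗ[ℝ] G →ₗ[ℝ] ℝ)
    (nabla : G →ₗ[ℝ] G →ₗ[ℝ] G)
    (A B C D E F : ℝ) (hEA : E + A ≠ 0)
    (hanti : ∀ X Y : G, lie X Y = - lie Y X)
    (h12 : lie (u 0) (u 1) = 0)
    (h13 : lie (u 0) (u 2) = 0)
    (h14 : lie (u 0) (u 3) = A • u 0 + B • u 1 + C • u 2)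
    (h23 : lie (u 1) (u 2) = 0)
    (h24 : lie (u 1) (u 3) = D • u 0 + E • u 1 + F • u 2)
    (h34 : lie (u 2) (u 3) = (((B + D) ^ 2 + 2 * (A ^ 2 + E ^ 2)) / (2 * (E + A))) • u 2)
    (hg : ∀ i j : Fin 4, g (u i) (u j) =
      if (i = 0 ∧ j = 0) ∨ (i = 1 ∧ j = 1) ∨ (i = 2 ∧ j = 3) ∨ (i = 3 ∧ j = 2) then (1 : ℝ) else 0)
    (hK : ∀ X Y Z : G, 2 * g (nabla X Y) Z = g (lie X Y) Z - g (lie Y Z) X + g (lie Z X) Y) :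
    (let eps : Fin 4 → ℝ := fun i => if i = (2 : Fin 4) then (-1 : ℝ) else 1
     let ef : Fin 4 → G := ![u 0, u 1, (-(1/2 : ℝ)) • u 2 + u 3, ((1/2 : ℝ)) • u 2 + u 3]
     let lap : G → G := fun V : G => ∑ i : Fin 4, eps i • (nabla (ef i) (nabla (ef i) V) - nabla (nabla (ef i) (ef i)) V)
     let tr : G → G := fun V : G => ∑ i : Fin 4, eps i • (nabla (lie (nabla (ef i) V) V) (ef i) - nabla (nabla (ef i) V) (nabla V (ef i)) + nabla V (nabla (nabla (ef i) V) (ef i)))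
     ∀ a b c d : ℝ,
       ((lap (a • ef 0 + b • ef 1 + c • ef 2 + d • ef 3) = 0 ∧
         tr (a • ef 0 + b • ef 1 + c • ef 2 + d • ef 3) = 0) ↔ c = -d)) := by
  intro eps ef lap tr a b c d
  have hΛ := lie_basis_eq_bracketTable hanti h12 h13 h14 h23 h24 h34
  have hΓ := nabla_basis_eq_christoffelTable g hg hK hΛ
  have hlap : lap (a • ef 0 + b • ef 1 + c • ef 2 + d • ef 3) =
      (-((c + d) * (A ^ 2 + E ^ 2 + (B + D) ^ 2 / 2))) • u 2 :=
    roughLaplacian_frame_eq hΓ a b c d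
  have hcoeff_pos : 0 < A ^ 2 + E ^ 2 + (B + D) ^ 2 / 2 := by
    nlinarith [sq_nonneg (A - E), sq_nonneg (B + D), sq_pos_of_ne_zero hEA]
  constructor
  · rintro ⟨hlap_zero, -⟩
    rw [hlap, smul_eq_zero, neg_eq_zero, mul_eq_zero] at hlap_zero
    rcases hlap_zero with (hcd | hcoeff_zero) | hu
    · linarith
    · exact absurd hcoeff_zero hcoeff_pos.ne'
    · exact absurd hu (u.ne_zero 2)
  · intro hcd
    exact ⟨by rw [hlap, hcd, neg_add_cancel, zero_mul, neg_zero, zero_smul],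
      curvatureTrace_frame_eq_zero hΛ hΓ hcd⟩

theorem stmt_18 {G : Type*} [AddCommGroup G] [Module ℝ G]
    (u : Module.Basis (Fin 4) ℝ G)
    (lie : G →ₗ[ℝ] G →ₗ[ℝ] G)
    (g : G →ₗ[ℝ] G →ₗ[ℝ] ℝ)
    (nabla : G →ₗ[ℝ] G →ₗ[ℝ] G)
    (A B C D E F : ℝ) (hEA : E + A ≠ 0)
    (hanti : ∀ X Y : G, lie X Y = - lie Y X)
    (h12 : lie (u 0) (u 1) = 0)
    (h13 : lie (u 0) (u 2) = 0)
    (h14 : lie (u 0) (u 3) = A • u 0 + B • u 1 + C • u 2)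
    (h23 : lie (u 1) (u 2) = 0)
    (h24 : lie (u 1) (u 3) = D • u 0 + E • u 1 + F • u 2)
    (h34 : lie (u 2) (u 3) = (((B + D) ^ 2 + 2 * (A ^ 2 + E ^ 2)) / (2 * (E + A))) • u 2)
    (hg : ∀ i j : Fin 4, g (u i) (u j) =
      if (i = 0 ∧ j = 0) ∨ (i = 1 ∧ j = 1) ∨ (i = 2 ∧ j = 3) ∨ (i = 3 ∧ j = 2) then (1 : ℝ) else 0)
    (hgsymm : ∀ X Y : G, g X Y = g Y X)
    (hK : ∀ X Y Z : G, 2 * g (nabla X Y) Z = g (lie X Y) Z - g (lie Y Z) X + g (lie Z X) Y) :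
    (let eps : Fin 4 → ℝ := fun i => if i = (2 : Fin 4) then (-1 : ℝ) else 1
     let ef : Fin 4 → G := ![u 0, u 1, (-(1/2 : ℝ)) • u 2 + u 3, ((1/2 : ℝ)) • u 2 + u 3]
     let lap : G → G := fun V : G => ∑ i : Fin 4, eps i • (nabla (ef i) (nabla (ef i) V) - nabla (nabla (ef i) (ef i)) V)
     let tr : G → G := fun V : G => ∑ i : Fin 4, eps i • (nabla (lie (nabla (ef i) V) V) (ef i) - nabla (nabla (ef i) V) (nabla V (ef i)) + nabla V (nabla (nabla (ef i) V) (ef i)))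
     ∀ a b c d : ℝ,
       ((lap (a • ef 0 + b • ef 1 + c • ef 2 + d • ef 3) = 0 ∧
         tr (a • ef 0 + b • ef 1 + c • ef 2 + d • ef 3) = 0) ↔ c = -d)) :=
  stmt_18_general u lie g nabla A B C D E F hEA hanti h12 h13 h14 h23 h24 h34 hg hK
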